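/- (Reconstructability at the MBR point, abstract form) Let r, d, k be positive integers with r dividing k and k ≤ d, and let W_1, …, W_k be subspaces of V with dim W_i = d for every i, satisfying: (L2) for every i and every S ⊆ {1,…,k}\{i} with |S| ≤ r−1, I(W_i ; W_S) = 0; (L3) for every i and all disjoint subsets B_1, B_2 ⊆ {1,…,k}\{i}, I(W_i ; W_{B_1} | W_{B_2}) = I(W_i ; W_{B_1}); (L4) for every i and every S ⊆ {1,…,k}\{i} with |S| = r, I(W_i ; W_S) ≤ r. If moreover 2 · dim V = k(2d − k + r), then the k subspaces span the whole space: Σ_{i=1}^k W_i = V. -/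

import Mathlib

/-- Mutual information of two subspaces: `I(A;B) = dim A + dim B − dim(A+B)`. -/
noncomputable def mi (F : Type*) {V : Type*} [Field F] [AddCommGroup V] [Module F V]
    (A B : Submodule F V) : ℤ :=
  (Module.finrank F A : ℤ) + Module.finrank F B - Module.finrank F (A ⊔ B : Submodule F V)

/-- Conditional mutual information of subspaces:
`I(A;B|C) = dim(A+C) + dim(B+C) − dim(A+B+C) − dim C`. -/
noncomputable def cmi (F : Type*) {V : Type*} [Field F] [AddCommGroup V] [Module F V]
    (A B C : Submodule F V) : ℤ :=
  (Module.finrank F (A ⊔ C : Submodule F V) : ℤ) + Module.finrank F (B ⊔ C : Submodule F V)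
    - Module.finrank F (A ⊔ B ⊔ C : Submodule F V) - Module.finrank F C

/-!
If every pair of nodes has mutual information at most `b`, then (L3) makes mutual information
additive over the nodes, so `I(W_i ; W_S) ≤ b |S|` and adding the nodes one at a time gives
`2 dim Σ_i W_i ≥ 2kd − b k(k−1)`. By (L2) for `r ≥ 2`, and by (L4) for `r = 1`, one can take
`b = [r = 1]`; in both cases `b(k−1) ≤ k − r`, so `dim Σ_i W_i ≥ k(2d − k + r)/2 = dim V`.
-/

section InformationBounds

variable {F V : Type*} [Field F] [AddCommGroup V] [Module F V]

theorem finrank_sup_eq_sub_mi (A B : Submodule F V) :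
    (Module.finrank F ↥(A ⊔ B) : ℤ) = Module.finrank F A + Module.finrank F B - mi F A B := by
  simp only [mi]
  ring

theorem mi_bot_right (A : Submodule F V) : mi F A ⊥ = 0 := by
  rw [mi, sup_bot_eq, finrank_bot]
  ring

theorem mi_sup_eq_mi_add_cmi (A B C : Submodule F V) :
    mi F A (B ⊔ C) = mi F A C + cmi F A B C := by
  simp only [mi, cmi]
  rw [sup_assoc]
  ring

variable {ι : Type*} [DecidableEq ι] (W : ι → Submodule F V) (b : ℤ)

theorem mi_finset_sup_le_mul_card
    (hpair : ∀ i j, i ≠ j → mi F (W i) (W j) ≤ b)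
    (hcond : ∀ i j (S : Finset ι), i ≠ j → i ∉ S → j ∉ S →
      cmi F (W i) (W j) (S.sup W) = mi F (W i) (W j))
    (i : ι) (S : Finset ι) (hi : i ∉ S) :
    mi F (W i) (S.sup W) ≤ b * S.card := by
  induction S using Finset.induction_on with
  | empty => simp [mi_bot_right]
  | insert j S hjS ih =>
    have hij : i ≠ j := fun h => hi (h ▸ Finset.mem_insert_self j S)
    have hiS : i ∉ S := fun h => hi (Finset.mem_insert_of_mem h)
    rw [Finset.sup_insert, mi_sup_eq_mi_add_cmi, hcond i j S hij hiS hjS,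
      Finset.card_insert_of_notMem hjS]
    push_cast
    linarith [ih hiS, hpair i j hij]

theorem sum_finrank_sub_le_finrank_finset_sup
    (hmi : ∀ i (S : Finset ι), i ∉ S → mi F (W i) (S.sup W) ≤ b * S.card) (T : Finset ι) :
    2 * ∑ i ∈ T, (Module.finrank F (W i) : ℤ) - b * (T.card * (T.card - 1)) ≤
      2 * Module.finrank F ↥(T.sup W) := by
  induction T using Finset.induction_on with
  | empty => simp
  | insert j T hjT ih =>
    rw [Finset.sup_insert, finrank_sup_eq_sub_mi, Finset.sum_insert hjT,
      Finset.card_insert_of_notMem hjT]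
    push_cast
    nlinarith [hmi j T hjT]

end InformationBounds

theorem mbr_reconstructability_general
    (F V : Type*) [Field F] [AddCommGroup V] [Module F V] [FiniteDimensional F V]
    (r d k : ℕ) (hr : 0 < r) (hk : 0 < k)
    (hrk : r ∣ k)
    (W : Fin k → Submodule F V)
    (hdim : ∀ i : Fin k, Module.finrank F (W i) = d)
    (hL2 : ∀ (i : Fin k) (S : Finset (Fin k)), i ∉ S → S.card ≤ r - 1 →
      mi F (W i) (S.sup W) = 0)
    (hL3 : ∀ (i : Fin k) (B₁ B₂ : Finset (Fin k)), i ∉ B₁ → i ∉ B₂ → Disjoint B₁ B₂ →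
      cmi F (W i) (B₁.sup W) (B₂.sup W) = mi F (W i) (B₁.sup W))
    (hL4 : ∀ (i : Fin k) (S : Finset (Fin k)), i ∉ S → S.card = r →
      mi F (W i) (S.sup W) ≤ (r : ℤ))
    (hV : 2 * (Module.finrank F V : ℤ) = (k : ℤ) * (2 * d - k + r)) :
    (Finset.univ : Finset (Fin k)).sup W = ⊤ := by
  set b : ℤ := if r = 1 then 1 else 0
  have hpair : ∀ i j, i ≠ j → mi F (W i) (W j) ≤ b := by
    intro i j hij
    have hj : i ∉ ({j} : Finset (Fin k)) := Finset.notMem_singleton.mpr hij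
    by_cases h1 : r = 1
    · simpa [b, h1] using hL4 i {j} hj (by simp [h1])
    · simpa [b, h1] using (hL2 i {j} hj (by rw [Finset.card_singleton]; omega)).le
  have hcond : ∀ i j (S : Finset (Fin k)), i ≠ j → i ∉ S → j ∉ S →
      cmi F (W i) (W j) (S.sup W) = mi F (W i) (W j) := by
    intro i j S hij hiS hjS
    simpa using hL3 i {j} S (by simpa using hij) hiS (Finset.disjoint_singleton_left.mpr hjS)
  have hspan := sum_finrank_sub_le_finrank_finset_sup W b
    (mi_finset_sup_le_mul_card W b hpair hcond) Finset.univ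
  simp only [hdim, Finset.sum_const, Finset.card_univ, Fintype.card_fin, nsmul_eq_mul] at hspan
  have hb : b * ((k : ℤ) - 1) ≤ k - r := by
    have hrk' : (r : ℤ) ≤ k := by exact_mod_cast Nat.le_of_dvd hk hrk
    rcases eq_or_ne r 1 with h1 | h1
    · simp [b, h1]
    · simpa [b, h1] using hrk'
  have hle : Module.finrank F ↥((Finset.univ : Finset (Fin k)).sup W) ≤ Module.finrank F V :=
    Submodule.finrank_le _
  refine Submodule.eq_top_of_finrank_eq (le_antisymm hle ?_)
  have hk0 : (0 : ℤ) ≤ k := by positivity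
  zify
  nlinarith

/-- Reconstructability at the MBR point, abstract form: under
(L2), (L3), (L4), if moreover `2 · dim V = k(2d − k + r)`, then the `k` node
subspaces span the whole space. -/
theorem mbr_reconstructability
    (F V : Type*) [Field F] [AddCommGroup V] [Module F V] [FiniteDimensional F V]
    (r d k : ℕ) (hr : 0 < r) (hd : 0 < d) (hk : 0 < k)
    (hrk : r ∣ k) (hkd : k ≤ d)
    (W : Fin k → Submodule F V)
    (hdim : ∀ i : Fin k, Module.finrank F (W i) = d)
    (hL2 : ∀ (i : Fin k) (S : Finset (Fin k)), i ∉ S → S.card ≤ r - 1 →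
      mi F (W i) (S.sup W) = 0)
    (hL3 : ∀ (i : Fin k) (B₁ B₂ : Finset (Fin k)), i ∉ B₁ → i ∉ B₂ → Disjoint B₁ B₂ →
      cmi F (W i) (B₁.sup W) (B₂.sup W) = mi F (W i) (B₁.sup W))
    (hL4 : ∀ (i : Fin k) (S : Finset (Fin k)), i ∉ S → S.card = r →
      mi F (W i) (S.sup W) ≤ (r : ℤ))
    (hV : 2 * (Module.finrank F V : ℤ) = (k : ℤ) * (2 * d - k + r)) :
    (Finset.univ : Finset (Fin k)).sup W = ⊤ :=
  mbr_reconstructability_general F V r d k hr hk hrk W hdim hL2 hL3 hL4 hV
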